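/- arXiv:2401.14986 — 2 statements merged into one kernel-verified Lean document; each statement's English description precedes it below -/
import Mathlib

section
/- If U(t) solves the Schrödinger equation i·U'(t) = H(t)·U(t) and the pair (H, D) satisfies the brachistochrone equation d/dt(H + D) + i[H, D] = 0, then the generalized angular momentum U(t)† (H(t)+D(t)) U(t) is constant in time. -/
/-!
In the Heisenberg picture an observable `K(t)` evolves as `U† K U`, whose derivative is
`U† (K' + i[H, K]) U`. For `K = H + D` the commutator `[H, H + D]` equals `[H, D]`, so the
brachistochrone equation `K' = -i[H, D]` makes this derivative vanish identically.
-/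

open Matrix
attribute [local instance] Matrix.linftyOpNormedAddCommGroup Matrix.linftyOpNormedSpace
attribute [local instance] Matrix.linftyOpNormedRing Matrix.linftyOpNormedAlgebra

section Schrodinger

variable {A : Type*} [NormedRing A] [NormedAlgebra ℂ A] [StarRing A] [StarModule ℂ A]
  [ContinuousStar A] {U H K : ℝ → A} {K' : A} {t : ℝ}

theorem hasDerivAt_star_of_schrodinger (hH : IsSelfAdjoint (H t))
    (hU : HasDerivAt U (-Complex.I • (H t * U t)) t) :
    HasDerivAt (fun s => star (U s)) (Complex.I • (star (U t) * H t)) t := by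
  simpa only [star_smul, star_neg, Complex.star_def, Complex.conj_I, neg_neg, star_mul,
    hH.star_eq] using hU.star

theorem hasDerivAt_star_mul_mul_of_schrodinger (hH : IsSelfAdjoint (H t))
    (hU : HasDerivAt U (-Complex.I • (H t * U t)) t) (hK : HasDerivAt K K' t) :
    HasDerivAt (fun s => star (U s) * K s * U s)
      (star (U t) * (K' + Complex.I • (H t * K t - K t * H t)) * U t) t := by
  refine (((hasDerivAt_star_of_schrodinger hH hU).mul hK).mul hU).congr_deriv ?_
  simp only [Pi.mul_apply, mul_add, add_mul, mul_sub, sub_mul, smul_mul_assoc, mul_smul_comm,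
    mul_assoc, smul_sub, neg_smul, mul_neg]
  abel

end Schrodinger

theorem angular_momentum_conserved_general {n : ℕ}
    (U H D : ℝ → Matrix (Fin n) (Fin n) ℂ)
    (hH : ∀ t, (H t).IsHermitian)
    (hschrod : ∀ t, HasDerivAt U (-(Complex.I) • (H t * U t)) t)
    (hbrach : ∀ t, HasDerivAt (fun s => H s + D s)
      (-(Complex.I) • (H t * D t - D t * H t)) t) :
    ∀ t : ℝ, (U t)ᴴ * (H t + D t) * U t = (U 0)ᴴ * (H 0 + D 0) * U 0 := by
  -- Instance search does not see the norm topology as the product topology.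
  have : @ContinuousStar (Matrix (Fin n) (Fin n) ℂ)
      (Matrix.linftyOpNormedRing (α := ℂ)).toUniformSpace.toTopologicalSpace _ :=
    ⟨continuous_id.matrix_conjTranspose⟩
  have hcomm : ∀ t, H t * (H t + D t) - (H t + D t) * H t = H t * D t - D t * H t :=
    fun t => by noncomm_ring
  have hzero : ∀ t, HasDerivAt (fun s => (U s)ᴴ * (H s + D s) * U s) 0 t := fun t => by
    have h := hasDerivAt_star_mul_mul_of_schrodinger (hH t).isSelfAdjoint (hschrod t) (hbrach t)
    rwa [hcomm, neg_smul, neg_add_cancel, mul_zero, zero_mul] at h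
  exact fun t => is_const_of_deriv_eq_zero (fun s => (hzero s).differentiableAt)
    (fun s => (hzero s).deriv) t 0

theorem angular_momentum_conserved {n : ℕ}
    (U H D : ℝ → Matrix (Fin n) (Fin n) ℂ)
    (hUunit : ∀ t, (U t)ᴴ * U t = 1 ∧ U t * (U t)ᴴ = 1)
    (hH : ∀ t, (H t).IsHermitian) (hD : ∀ t, (D t).IsHermitian)
    (hDH : Differentiable ℝ H) (hDD : Differentiable ℝ D)
    (hschrod : ∀ t, HasDerivAt U (-(Complex.I) • (H t * U t)) t)
    (hbrach : ∀ t, HasDerivAt (fun s => H s + D s)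
      (-(Complex.I) • (H t * D t - D t * H t)) t) :
    ∀ t : ℝ, (U t)ᴴ * (H t + D t) * U t = (U 0)ᴴ * (H 0 + D 0) * U 0 :=
  angular_momentum_conserved_general U H D hH hschrod hbrach
end

section
/- Suppose U(t) is unitary with U(0) = I, solves i·U'(t) = H(t)·U(t), and U(t)†(H(t)+D(t))U(t) = H(0)+D(0) for all t. If additionally U_{-D}(t) is unitary with U_{-D}(0) = I and solves i·U_{-D}'(t) = −D(t)·U_{-D}(t), then U(t) = U_{-D}(t)·exp(−i·(H(0)+D(0))·t) for all t. -/
/-!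
Conjugating the conservation law by `U` gives `(H t + D t) * U t = U t * C` with `C = H 0 + D 0`.
Hence `W t = (U_{-D} t)ᴴ * U t` satisfies `W' = W * (-i C)`: the `-D` rotation of `U_{-D}` cancels
the `D` part of the generator, and the conservation law turns `-i (H + D) U` into `-i U C`.
Since `W 0 = 1`, `W t * exp (i t C)` has zero derivative, so `W t = exp (-i t C)`.
-/

open Matrix NormedSpace

attribute [local instance] Matrix.linftyOpNormedAddCommGroup Matrix.linftyOpNormedSpace
attribute [local instance] Matrix.linftyOpNormedRing Matrix.linftyOpNormedAlgebra

theorem eq_mul_exp_smul_of_hasDerivAt {𝔸 : Type*} [NormedRing 𝔸] [NormedAlgebra ℝ 𝔸]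
    [CompleteSpace 𝔸] {W : ℝ → 𝔸} {B : 𝔸} (hW : ∀ t, HasDerivAt W (W t * B) t) (t : ℝ) :
    W t = W 0 * exp (t • B) := by
  -- `exp_add_of_commute` is stated for `ℚ`-algebras.
  let : NormedAlgebra ℚ 𝔸 := NormedAlgebra.restrictScalars ℚ ℝ 𝔸
  have hconst : ∀ s, HasDerivAt (fun s => W s * exp (s • -B)) 0 s := fun s =>
    ((hW s).mul (hasDerivAt_exp_smul_const' (-B) s)).congr_deriv (by noncomm_ring)
  have h := is_const_of_deriv_eq_zero (fun s => (hconst s).differentiableAt)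
    (fun s => (hconst s).deriv) t 0
  calc W t = W t * exp (t • -B) * exp (t • B) := by
        rw [mul_assoc, smul_neg, ← NormedSpace.exp_add_of_commute (Commute.refl _).neg_left,
          neg_add_cancel, exp_zero, mul_one]
    _ = W 0 * exp (t • B) := by simp only [h, zero_smul, exp_zero, mul_one]

theorem hasDerivAt_star_mul_of_mem_unitary {𝔸 : Type*} [NormedRing 𝔸] [NormedAlgebra ℝ 𝔸]
    [StarRing 𝔸] [StarModule ℝ 𝔸] [ContinuousStar 𝔸] {U V A B : ℝ → 𝔸} {t : ℝ}
    (hV : ∀ s, V s ∈ unitary 𝔸) (hVode : ∀ s, HasDerivAt V (A s * V s) s)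
    (hUode : HasDerivAt U (B t * U t) t) :
    HasDerivAt (fun s => star (V s) * U s) (star (V t) * ((B t - A t) * U t)) t := by
  -- The derivative `w` is pinned down by differentiating `V * (star V * U) = U`.
  obtain ⟨w, hw⟩ : ∃ w, HasDerivAt (fun s => star (V s) * U s) w t :=
    ⟨_, (hVode t).star.mul hUode⟩
  have hVVU : ∀ s, V s * (star (V s) * U s) = U s := fun s => by
    rw [← mul_assoc, Unitary.mul_star_self_of_mem (hV s), one_mul]
  have hVw : V t * w = (B t - A t) * U t := by
    have h := ((hVode t).mul hw).unique (hUode.congr_of_eventuallyEq (.of_forall hVVU))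
    rw [mul_assoc, hVVU] at h
    rw [sub_mul, ← h, add_sub_cancel_left]
  rwa [← hVw, ← mul_assoc, Unitary.star_mul_self_of_mem (hV t), one_mul]

theorem mul_eq_mul_of_star_mul_mul_eq {R : Type*} [Monoid R] [StarMul R] {U X C : R}
    (hU : U ∈ unitary R) (h : star U * X * U = C) : X * U = U * C := by
  rw [← h, ← mul_assoc, ← mul_assoc, Unitary.mul_star_self_of_mem hU, one_mul]

theorem unitary_factorization_general {n : ℕ}
    (U V H D : ℝ → Matrix (Fin n) (Fin n) ℂ)
    (hUunit : ∀ t, (U t)ᴴ * U t = 1 ∧ U t * (U t)ᴴ = 1)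
    (hVunit : ∀ t, (V t)ᴴ * V t = 1 ∧ V t * (V t)ᴴ = 1)
    (hU0 : U 0 = 1) (hV0 : V 0 = 1)
    (hUode : ∀ t, HasDerivAt U (-(Complex.I) • (H t * U t)) t)
    (hVode : ∀ t, HasDerivAt V (Complex.I • (D t * V t)) t)
    (hcons : ∀ t, (U t)ᴴ * (H t + D t) * U t = H 0 + D 0) :
    ∀ t : ℝ, U t = V t * NormedSpace.exp ((-(Complex.I * (t : ℂ))) • (H 0 + D 0)) := by
  -- The norm topology is the product topology only up to unfolding `linftyOpNormedRing`, which
  -- instance search does not do.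
  have : @ContinuousStar (Matrix (Fin n) (Fin n) ℂ)
      PseudoMetricSpace.toUniformSpace.toTopologicalSpace _ :=
    ⟨continuous_id.matrix_conjTranspose⟩
  have hW : ∀ t, HasDerivAt (fun s => (V s)ᴴ * U s)
      ((V t)ᴴ * U t * (-Complex.I • (H 0 + D 0))) t := by
    intro t
    refine (hasDerivAt_star_mul_of_mem_unitary (A := fun s => Complex.I • D s)
      (B := fun s => -Complex.I • H s) hVunit
      (fun s => smul_mul_assoc Complex.I (D s) (V s) ▸ hVode s)
      (smul_mul_assoc (-Complex.I) (H t) (U t) ▸ hUode t)).congr_deriv ?_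
    have hflow := mul_eq_mul_of_star_mul_mul_eq (hUunit t) (hcons t)
    calc star (V t) * ((-Complex.I • H t - Complex.I • D t) * U t)
        = star (V t) * (-Complex.I • ((H t + D t) * U t)) := by
          rw [sub_mul, smul_mul_assoc, smul_mul_assoc, add_mul, smul_add, neg_smul, neg_smul,
            sub_eq_add_neg]
      _ = (V t)ᴴ * U t * (-Complex.I • (H 0 + D 0)) := by
          rw [hflow, mul_smul_comm, mul_smul_comm, mul_assoc]; rfl
  intro t
  have hWt := eq_mul_exp_smul_of_hasDerivAt hW t
  rw [hV0, hU0, conjTranspose_one, one_mul, one_mul, ← Complex.coe_smul, smul_smul] at hWt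
  calc U t = V t * ((V t)ᴴ * U t) := by rw [← mul_assoc, (hVunit t).2, one_mul]
    _ = _ := by rw [hWt, mul_neg, mul_comm (t : ℂ)]; rfl

theorem unitary_factorization {n : ℕ}
    (U V H D : ℝ → Matrix (Fin n) (Fin n) ℂ)
    (hHcont : Continuous H) (hDcont : Continuous D)
    (hUunit : ∀ t, (U t)ᴴ * U t = 1 ∧ U t * (U t)ᴴ = 1)
    (hVunit : ∀ t, (V t)ᴴ * V t = 1 ∧ V t * (V t)ᴴ = 1)
    (hU0 : U 0 = 1) (hV0 : V 0 = 1)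
    (hUode : ∀ t, HasDerivAt U (-(Complex.I) • (H t * U t)) t)
    (hVode : ∀ t, HasDerivAt V (Complex.I • (D t * V t)) t)
    (hcons : ∀ t, (U t)ᴴ * (H t + D t) * U t = H 0 + D 0) :
    ∀ t : ℝ, U t = V t * NormedSpace.exp ((-(Complex.I * (t : ℂ))) • (H 0 + D 0)) :=
  unitary_factorization_general U V H D hUunit hVunit hU0 hV0 hUode hVode hcons
end
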